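/- Jeffrey–Kirwan residue via normal forms. Let 𝔄 = [α₁,…,αₙ] (n ≥ r) be a polarized list of nonzero vectors in ℝʳ, let ε ∈ ℝʳ be regular with respect to 𝔄, and let J ⊆ {1,…,n} be such that (αⱼ)_{j∈J} is a basis of ℝʳ with ε ∈ Cone(αⱼ : j ∈ J). Let λ be a Jeffrey–Kirwan functional for (𝔄, ε). Fix a monomial order on ℝ[x₁,…,x_r], let P be a homogeneous polynomial of degree n − r, let N_P be a normal form of P with respect to I_{𝔄,ε}, and let N_Δ be a normal form of Δ = ∏_{i∉J} αᵢ with respect to I_{𝔄,ε}. Then N_Δ ≠ 0 and √(det[⟨αⱼ, α_k⟩]_{j,k∈J}) · λ(P/∏ᵢ₌₁ⁿ αᵢ) · N_Δ = N_P as polynomials; equivalently, λ(P/∏ᵢ₌₁ⁿ αᵢ) = (1/√(det[⟨αⱼ, α_k⟩]_{j,k∈J})) · N_P/N_Δ. -/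

import Mathlib

open MvPolynomial

noncomputable section

/-- The standard inner product on `ℝʳ`. -/
def dotp {r : ℕ} (v w : Fin r → ℝ) : ℝ := ∑ i, v i * w i

/-- The linear polynomial `v₁x₁ + … + v_r x_r` associated to a vector `v ∈ ℝʳ`. -/
def linPoly {r : ℕ} (v : Fin r → ℝ) : MvPolynomial (Fin r) ℝ := ∑ i, C (v i) * X i

/-- The fraction field of `ℝ[x₁,…,x_r]`. -/
abbrev Frac (r : ℕ) := FractionRing (MvPolynomial (Fin r) ℝ)

/-- The canonical embedding of `ℝ[x₁,…,x_r]` into its fraction field. -/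
def emb {r : ℕ} (p : MvPolynomial (Fin r) ℝ) : Frac r := algebraMap _ _ p

/-- A real constant viewed inside the fraction field `Frac r`. -/
def cst {r : ℕ} (a : ℝ) : Frac r := emb (C a)

/-- `v` lies in the cone generated by the vectors `α i`, `i ∈ s`. -/
def InCone {r n : ℕ} (α : Fin n → Fin r → ℝ) (s : Finset (Fin n)) (v : Fin r → ℝ) : Prop :=
  ∃ c : Fin n → ℝ, (∀ i ∈ s, 0 ≤ c i) ∧ v = ∑ i ∈ s, c i • α i

/-- The cone generated by the vectors `α i`, `i ∈ s`, as a set. -/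
def coneSet {r n : ℕ} (α : Fin n → Fin r → ℝ) (s : Finset (Fin n)) : Set (Fin r → ℝ) :=
  {v | InCone α s v}

/-- The list `α` is polarized: some `ξ` pairs strictly positively with every `α i`. -/
def Polarized {r n : ℕ} (α : Fin n → Fin r → ℝ) : Prop :=
  ∃ ξ : Fin r → ℝ, ∀ i, 0 < dotp (α i) ξ

/-- `ε` is regular with respect to the list `α`: it lies in no proper subspace spanned by a
subset of the list. -/
def RegularWrt {r n : ℕ} (α : Fin n → Fin r → ℝ) (ε : Fin r → ℝ) : Prop :=
  ∀ s : Set (Fin n), Submodule.span ℝ (α '' s) ≠ ⊤ → ε ∉ Submodule.span ℝ (α '' s)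

/-- A set of indices is generating if the corresponding vectors span `ℝʳ`. -/
def Generating {r n : ℕ} (α : Fin n → Fin r → ℝ) (J : Set (Fin n)) : Prop :=
  Submodule.span ℝ (α '' J) = ⊤

/-- The fraction `P / ∏ᵢ αᵢ^{mᵢ}` in the fraction field. -/
def fracOf {r n : ℕ} (α : Fin n → Fin r → ℝ) (P : MvPolynomial (Fin r) ℝ) (m : Fin n → ℕ) :
    Frac r :=
  emb P / ∏ i, emb (linPoly (α i)) ^ m i

/-- `R_𝔄`: the span of all fractions `P / ∏ᵢ αᵢ^{mᵢ}`. -/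
def Rspace {r n : ℕ} (α : Fin n → Fin r → ℝ) : Submodule ℝ (Frac r) :=
  Submodule.span ℝ {x | ∃ P m, x = fracOf α P m}

/-- `G_𝔄`: the span of the fractions `1 / ∏ᵢ αᵢ^{mᵢ}` with generating support. -/
def Gspace {r n : ℕ} (α : Fin n → Fin r → ℝ) : Submodule ℝ (Frac r) :=
  Submodule.span ℝ {x | ∃ m : Fin n → ℕ, Generating α {i | 0 < m i} ∧ x = fracOf α 1 m}

/-- `NG_𝔄`: the span of the fractions `P / ∏ᵢ αᵢ^{mᵢ}` with non-generating support. -/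
def NGspace {r n : ℕ} (α : Fin n → Fin r → ℝ) : Submodule ℝ (Frac r) :=
  Submodule.span ℝ {x | ∃ P m, ¬ Generating α {i | 0 < m i} ∧ x = fracOf α P m}

/-- `Φ_σ = 1 / ∏_{j ∈ σ} αⱼ`. -/
def Phi {r n : ℕ} (α : Fin n → Fin r → ℝ) (σ : Finset (Fin n)) : Frac r :=
  (∏ j ∈ σ, emb (linPoly (α j)))⁻¹

/-- `(αⱼ)_{j ∈ σ}` is a basis of `ℝʳ`. -/
def IsConeBasis {r n : ℕ} (α : Fin n → Fin r → ℝ) (σ : Finset (Fin n)) : Prop :=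
  LinearIndependent ℝ (fun j : {x // x ∈ σ} => α j.1) ∧
    Submodule.span ℝ (α '' ↑σ) = ⊤

/-- The Gram determinant `det[⟨αⱼ, α_k⟩]_{j,k ∈ σ}`. -/
def gram {r n : ℕ} (α : Fin n → Fin r → ℝ) (σ : Finset (Fin n)) : ℝ :=
  Matrix.det (Matrix.of fun j k : {x // x ∈ σ} => dotp (α j.1) (α k.1))

/-- A Jeffrey–Kirwan functional for `(𝔄, ε)`. -/
def IsJKFunctional {r n : ℕ} (α : Fin n → Fin r → ℝ) (ε : Fin r → ℝ)
    (lam : Frac r →ₗ[ℝ] ℝ) : Prop :=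
  (∀ x ∈ NGspace α, lam x = 0) ∧
  (∀ m : Fin n → ℕ, Generating α {i | 0 < m i} → (∑ i, m i) ≠ r →
    lam (fracOf α 1 m) = 0) ∧
  (∀ σ : Finset (Fin n), IsConeBasis α σ →
    (InCone α σ ε → lam (Phi α σ) = 1 / Real.sqrt (gram α σ)) ∧
    (¬ InCone α σ ε → lam (Phi α σ) = 0))

/-- The ideal `I_{𝔄,ε}` generated by the products `∏_{j∈J} αⱼ` over all `J` such that
`ε ∉ Cone(αᵢ : i ∉ J)`. -/
def JKIdeal {r n : ℕ} (α : Fin n → Fin r → ℝ) (ε : Fin r → ℝ) :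
    Ideal (MvPolynomial (Fin r) ℝ) :=
  Ideal.span {g | ∃ J : Finset (Fin n), ¬ InCone α Jᶜ ε ∧ g = ∏ j ∈ J, linPoly (α j)}

/-- `H` is a hyperplane of `ℝʳ` spanned by a subset of the list `α`. -/
def IsHyperplaneOf {r n : ℕ} (α : Fin n → Fin r → ℝ) (H : Submodule ℝ (Fin r → ℝ)) : Prop :=
  (∃ s : Set (Fin n), H = Submodule.span ℝ (α '' s)) ∧ Module.finrank ℝ H = r - 1

/-- `Cone(𝔄)` minus the union of the hyperplanes spanned by subsets of `𝔄`. -/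
def chamberComplement {r n : ℕ} (α : Fin n → Fin r → ℝ) : Set (Fin r → ℝ) :=
  coneSet α Finset.univ \ ⋃ H ∈ {H | IsHyperplaneOf α H}, (H : Set (Fin r → ℝ))

/-- A chamber of `𝔄`: a connected component of `Cone(𝔄) ∖ ⋃_{H ∈ ℋ(𝔄)} H`. -/
def IsChamber {r n : ℕ} (α : Fin n → Fin r → ℝ) (c : Set (Fin r → ℝ)) : Prop :=
  ∃ x ∈ chamberComplement α, c = connectedComponentIn (chamberComplement α) x

/-- A monomial order on exponent vectors in `Fin r →₀ ℕ`: a total order compatible with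
addition which is a well-order. -/
structure MonomialOrd (r : ℕ) where
  lt : (Fin r →₀ ℕ) → (Fin r →₀ ℕ) → Prop
  irrefl : ∀ a, ¬ lt a a
  trans : ∀ a b c, lt a b → lt b c → lt a c
  total : ∀ a b, a ≠ b → lt a b ∨ lt b a
  add_right : ∀ a b c, lt a b → lt (a + c) (b + c)
  wf : WellFounded lt

/-- `m` is the exponent of the leading monomial of `f`. -/
def IsLeadMonomial {r : ℕ} (o : MonomialOrd r) (f : MvPolynomial (Fin r) ℝ)
    (m : Fin r →₀ ℕ) : Prop :=
  m ∈ f.support ∧ ∀ m' ∈ f.support, m' ≠ m → o.lt m' m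

/-- `Lt(I)`: the ideal generated by the leading monomials of all nonzero elements of `I`. -/
def ltIdeal {r : ℕ} (o : MonomialOrd r) (I : Ideal (MvPolynomial (Fin r) ℝ)) :
    Ideal (MvPolynomial (Fin r) ℝ) :=
  Ideal.span {g | ∃ f ∈ I, f ≠ 0 ∧ ∃ m, IsLeadMonomial o f m ∧ g = monomial m (1 : ℝ)}

/-- `N` is a normal form of `f` with respect to `I`. -/
def IsNormalForm {r : ℕ} (o : MonomialOrd r) (I : Ideal (MvPolynomial (Fin r) ℝ))
    (f N : MvPolynomial (Fin r) ℝ) : Prop :=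
  f - N ∈ I ∧ ∀ m ∈ N.support, monomial m (1 : ℝ) ∉ ltIdeal o I

/-!
Write `Δ_S = ∏_{i ∉ S} αᵢ` and `L(Q) = λ(Q / ∏ᵢ αᵢ)`, so that `L(h Δ_S) = λ(h / ∏_{i ∈ S} αᵢ)`.
If `(αᵢ)_{i ∈ S}` spans, expanding a variable `x_k = ∑_{i ∈ S} cᵢ αᵢ` gives
`x_k Δ_S = ∑_{i ∈ S} cᵢ Δ_{S \ i}`: the degree of the numerator drops while `S` shrinks.

With this, the axioms of `λ` give `L(h Δ_S) = 0` whenever `ε ∉ Cone(S)`, so `L` vanishes on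
`I_{𝔄,ε}`, whose generators are exactly these `Δ_S`. The same expansion reduces a homogeneous `P`
of degree `n - r` modulo `I_{𝔄,ε}` to a combination of `Δ_σ` over bases `σ` with `ε ∈ Cone(σ)`,
and a simplex pivot `Δ_σ = ∑_{j ∈ σ} w_j Δ_{σ - j + b}` for an entering column of positive reduced
cost (cost `1` off `J`) moves each of them to a multiple of `Δ_J`: neighbours with `ε ∉ Cone` lie
in `I_{𝔄,ε}` and the others are cheaper. Hence `P ≡ c Δ_J`; applying `L` gives
`c = √gram · λ(P / ∏ αᵢ)`, and normal forms of congruent polynomials coincide, so `N_P = c N_Δ`.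
Finally `N_Δ ≠ 0` because `L(Δ_J) = 1 / √gram ≠ 0` while `L` kills `I_{𝔄,ε}`.
-/

theorem MvPolynomial.IsHomogeneous.induction_on {R σ : Type*} [CommSemiring R]
    {motive : ℕ → MvPolynomial σ R → Prop} (zero : ∀ d, motive d 0)
    (add : ∀ d p q, motive d p → motive d q → motive d (p + q)) (C : ∀ a, motive 0 (C a))
    (X_mul : ∀ d p i, motive d p → motive (d + 1) (X i * p))
    {d : ℕ} {p : MvPolynomial σ R} (hp : p.IsHomogeneous d) : motive d p := by
  classical
  have monomial_case : ∀ d (v : σ →₀ ℕ) (a : R), v.degree = d → motive d (monomial v a) := by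
    intro d
    induction d with
    | zero =>
      intro v a hv
      rw [(Finsupp.degree_eq_zero_iff v).mp hv]
      exact C a
    | succ d ih =>
      intro v a hv
      obtain ⟨i, hi⟩ : v.support.Nonempty :=
        Finsupp.support_nonempty_iff.mpr (by rintro rfl; simp at hv)
      have hvi : v - Finsupp.single i 1 + Finsupp.single i 1 = v :=
        tsub_add_cancel_of_le (Finsupp.single_le_iff.mpr (Nat.one_le_iff_ne_zero.mpr
          (Finsupp.mem_support_iff.mp hi)))
      have hdeg : (v - Finsupp.single i 1).degree = d := by
        have := congrArg Finsupp.degree hvi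
        rw [map_add, Finsupp.degree_single, hv] at this
        omega
      rw [← hvi, monomial_add_single, pow_one, mul_comm]
      exact X_mul d _ i (ih _ a hdeg)
  rw [p.as_sum]
  refine Finset.sum_induction _ (motive d) (add d) (zero d) fun v hv => monomial_case d v _ ?_
  rw [Finsupp.degree_eq_weight_one]
  exact hp (mem_support_iff.mp hv)

section Development

variable {r n : ℕ}

lemma linPoly_sum_smul {ι : Type*} (s : Finset ι) (c : ι → ℝ) (v : ι → Fin r → ℝ) :
    linPoly (∑ i ∈ s, c i • v i) = ∑ i ∈ s, C (c i) * linPoly (v i) := by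
  simp only [linPoly, Finset.sum_apply, Pi.smul_apply, smul_eq_mul, map_sum, map_mul,
    Finset.sum_mul, Finset.mul_sum, mul_assoc]
  exact Finset.sum_comm

lemma linPoly_single (k : Fin r) : linPoly (Pi.single k (1 : ℝ)) = X k := by
  simp [linPoly, Pi.single_apply]

lemma linPoly_ne_zero {v : Fin r → ℝ} (hv : v ≠ 0) : linPoly v ≠ 0 := by
  contrapose! hv
  funext k
  simpa [linPoly, coeff_sum, coeff_C_mul, coeff_X, Finsupp.single_left_inj] using
    congrArg (coeff (Finsupp.single k 1)) hv

lemma Finset.card_erase_insert_of_notMem {ι : Type*} [DecidableEq ι] {s : Finset ι} {a b : ι}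
    (hb : b ∉ s) (ha : a ∈ s) : ((insert b s).erase a).card = s.card := by
  rw [Finset.card_erase_of_mem (Finset.mem_insert_of_mem ha), Finset.card_insert_of_notMem hb,
    Nat.add_sub_cancel]

variable {α : Fin n → Fin r → ℝ} {ε : Fin r → ℝ}

lemma InCone.mono {s t : Finset (Fin n)} (hst : s ⊆ t) {v : Fin r → ℝ} (h : InCone α s v) :
    InCone α t v := by
  classical
  obtain ⟨c, hc, rfl⟩ := h
  refine ⟨fun i => if i ∈ s then c i else 0, fun i _ => ?_, ?_⟩
  · dsimp only
    split_ifs with hi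
    exacts [hc i hi, le_rfl]
  · rw [← Finset.sum_subset hst fun i _ hi => by simp [hi]]
    exact Finset.sum_congr rfl fun i hi => by simp [hi]

lemma sum_smul_mem_span_image (s : Finset (Fin n)) (t : Fin n → ℝ) :
    ∑ i ∈ s, t i • α i ∈ Submodule.span ℝ (α '' s) :=
  Submodule.sum_mem _ fun i hi => Submodule.smul_mem _ _ (Submodule.subset_span ⟨i, hi, rfl⟩)

lemma span_image_ne_top_of_card_lt {s : Finset (Fin n)} (hs : s.card < r) :
    Submodule.span ℝ (α '' s) ≠ ⊤ := by
  classical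
  intro h
  have := finrank_span_finset_le_card (R := ℝ) (s.image α)
  rw [Finset.coe_image, Set.finrank, h, finrank_top, Module.finrank_fin_fun] at this
  exact absurd (this.trans Finset.card_image_le) (by omega)

lemma RegularWrt.generating_of_inCone (hreg : RegularWrt α ε) {s : Finset (Fin n)}
    (h : InCone α s ε) : Generating α s := by
  obtain ⟨c, -, hc⟩ := h
  by_contra hs
  exact hreg s hs (hc ▸ sum_smul_mem_span_image s c)

lemma RegularWrt.coeff_pos (hreg : RegularWrt α ε) {s : Finset (Fin n)} (hs : s.card = r)
    {t : Fin n → ℝ} (ht : ∀ i ∈ s, 0 ≤ t i) (hε : ε = ∑ i ∈ s, t i • α i) {i : Fin n}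
    (hi : i ∈ s) : 0 < t i := by
  refine (ht i hi).lt_of_ne' fun h0 => hreg (s.erase i) (span_image_ne_top_of_card_lt ?_) ?_
  · rw [Finset.card_erase_of_mem hi, hs]
    exact Nat.sub_lt (hs ▸ Finset.card_pos.mpr ⟨i, hi⟩) one_pos
  · rw [hε, ← Finset.add_sum_erase s _ hi, h0, zero_smul, zero_add]
    exact sum_smul_mem_span_image _ t

lemma isConeBasis_of_card_eq {σ : Finset (Fin n)} (hσ : σ.card = r) (hspan : Generating α σ) :
    IsConeBasis α σ := by
  refine ⟨linearIndependent_of_top_le_span_of_card_eq_finrank ?_ (by simpa using hσ), hspan⟩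
  simpa [Generating, Set.image_eq_range] using hspan.ge

def IsConeBasis.basis {σ : Finset (Fin n)} (h : IsConeBasis α σ) : Module.Basis σ ℝ (Fin r → ℝ) :=
  Module.Basis.mk h.1 (by simpa [Set.image_eq_range] using h.2.ge)

lemma IsConeBasis.card_eq {σ : Finset (Fin n)} (h : IsConeBasis α σ) : σ.card = r := by
  simpa using (Module.finrank_eq_card_basis h.basis).symm

lemma IsConeBasis.exists_dual {σ : Finset (Fin n)} (h : IsConeBasis α σ) (f : Fin n → ℝ) :
    ∃ ℓ : Module.Dual ℝ (Fin r → ℝ), ∀ i ∈ σ, ℓ (α i) = f i :=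
  ⟨h.basis.constr ℝ fun j => f j, fun i hi => by
    simpa [IsConeBasis.basis] using h.basis.constr_basis ℝ (fun j => f j) ⟨i, hi⟩⟩

lemma IsConeBasis.gram_pos {σ : Finset (Fin n)} (h : IsConeBasis α σ) : 0 < gram α σ := by
  classical
  let M : Matrix σ (Fin r) ℝ := Matrix.of fun j k => α j k
  have hM : (M * M.conjTranspose).PosDef := Matrix.PosDef.mul_conjTranspose_self M
    (Matrix.vecMul_injective_iff.mpr h.1)
  exact hM.det_pos

def complProd (α : Fin n → Fin r → ℝ) (S : Finset (Fin n)) : MvPolynomial (Fin r) ℝ :=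
  ∏ i ∈ Sᶜ, linPoly (α i)

lemma complProd_univ : complProd α Finset.univ = 1 := by
  simp [complProd]

lemma linPoly_mul_complProd {S : Finset (Fin n)} {i : Fin n} (hi : i ∈ S) :
    linPoly (α i) * complProd α S = complProd α (S.erase i) := by
  rw [complProd, complProd, Finset.compl_erase, Finset.prod_insert (by simpa using hi)]

lemma linPoly_mul_complProd_of_eq_sum {S T : Finset (Fin n)} (hTS : T ⊆ S) {v : Fin r → ℝ}
    {c : Fin n → ℝ} (hv : v = ∑ i ∈ T, c i • α i) :
    linPoly v * complProd α S = ∑ i ∈ T, C (c i) * complProd α (S.erase i) := by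
  rw [hv, linPoly_sum_smul, Finset.sum_mul]
  exact Finset.sum_congr rfl fun i hi => by rw [mul_assoc, linPoly_mul_complProd (hTS hi)]

lemma exists_X_mul_complProd_eq_sum {S : Finset (Fin n)} (hS : Generating α S) (k : Fin r) :
    ∃ c : Fin n → ℝ, X k * complProd α S = ∑ i ∈ S, C (c i) * complProd α (S.erase i) := by
  have hk : Pi.single k (1 : ℝ) ∈ Submodule.span ℝ (α '' S) := hS ▸ Submodule.mem_top
  obtain ⟨c, hc⟩ := (Submodule.mem_span_image_finset_iff_exists_fun' ℝ).mp hk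
  exact ⟨c, by rw [← linPoly_single, linPoly_mul_complProd_of_eq_sum subset_rfl hc.symm]⟩

lemma complProd_mem_JKIdeal {S : Finset (Fin n)} (hS : ¬ InCone α S ε) :
    complProd α S ∈ JKIdeal α ε :=
  Ideal.subset_span ⟨Sᶜ, by rwa [compl_compl], rfl⟩

def residueMap (α : Fin n → Fin r → ℝ) (lam : Frac r →ₗ[ℝ] ℝ) :
    MvPolynomial (Fin r) ℝ →ₗ[ℝ] ℝ :=
  lam ∘ₗ LinearMap.mulRight ℝ (∏ i, emb (linPoly (α i)))⁻¹ ∘ₗ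
    (IsScalarTower.toAlgHom ℝ (MvPolynomial (Fin r) ℝ) (Frac r)).toLinearMap

lemma residueMap_apply (lam : Frac r →ₗ[ℝ] ℝ) (Q : MvPolynomial (Fin r) ℝ) :
    residueMap α lam Q = lam (emb Q / ∏ i, emb (linPoly (α i))) := by
  simp [residueMap, emb, div_eq_mul_inv]

lemma fracOf_ite_mem (S : Finset (Fin n)) (h : MvPolynomial (Fin r) ℝ) :
    fracOf α h (fun i => if i ∈ S then 1 else 0) = emb h / ∏ i ∈ S, emb (linPoly (α i)) := by
  simp [fracOf, pow_ite]

lemma residueMap_mul_complProd (hα : ∀ i, α i ≠ 0) (lam : Frac r →ₗ[ℝ] ℝ)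
    (S : Finset (Fin n)) (h : MvPolynomial (Fin r) ℝ) :
    residueMap α lam (h * complProd α S) = lam (fracOf α h fun i => if i ∈ S then 1 else 0) := by
  have hne : ∏ i ∈ Sᶜ, emb (linPoly (α i)) ≠ 0 := Finset.prod_ne_zero_iff.mpr fun i _ =>
    (map_ne_zero_iff _ (IsFractionRing.injective _ _)).mpr (linPoly_ne_zero (hα i))
  have hemb : emb (h * complProd α S) = emb h * ∏ i ∈ Sᶜ, emb (linPoly (α i)) := by
    simp [emb, complProd]
  rw [residueMap_apply, fracOf_ite_mem, ← Finset.prod_mul_prod_compl S, hemb,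
    mul_div_mul_right _ _ hne]

lemma support_ite_mem (S : Finset (Fin n)) :
    {i | 0 < (fun i => if i ∈ S then 1 else 0) i} = (S : Set (Fin n)) := by
  ext i
  by_cases hi : i ∈ S <;> simp [hi]

section Residue

variable {lam : Frac r →ₗ[ℝ] ℝ}

lemma residueMap_mul_complProd_of_not_generating (hα : ∀ i, α i ≠ 0)
    (hlam : IsJKFunctional α ε lam) {S : Finset (Fin n)} (hS : ¬ Generating α S)
    (h : MvPolynomial (Fin r) ℝ) : residueMap α lam (h * complProd α S) = 0 := by
  rw [residueMap_mul_complProd hα]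
  exact hlam.1 _ (Submodule.subset_span ⟨h, _, by rwa [support_ite_mem], rfl⟩)

lemma residueMap_complProd (hα : ∀ i, α i ≠ 0) (S : Finset (Fin n)) :
    residueMap α lam (complProd α S) = lam (Phi α S) := by
  rw [← one_mul (complProd α S), residueMap_mul_complProd hα, fracOf_ite_mem, Phi,
    show emb (1 : MvPolynomial (Fin r) ℝ) = 1 from map_one _, one_div]

lemma residueMap_complProd_of_not_inCone (hα : ∀ i, α i ≠ 0) (hlam : IsJKFunctional α ε lam)
    {S : Finset (Fin n)} (hS : ¬ InCone α S ε) : residueMap α lam (complProd α S) = 0 := by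
  by_cases hgen : Generating α S
  · by_cases hcard : S.card = r
    · rw [residueMap_complProd hα]
      exact (hlam.2.2 S (isConeBasis_of_card_eq hcard hgen)).2 hS
    · rw [← one_mul (complProd α S), residueMap_mul_complProd hα]
      exact hlam.2.1 _ (by rwa [support_ite_mem]) (by simpa using hcard)
  · simpa using residueMap_mul_complProd_of_not_generating hα hlam hgen 1

lemma residueMap_mul_complProd_of_not_inCone (hα : ∀ i, α i ≠ 0)
    (hlam : IsJKFunctional α ε lam) (h : MvPolynomial (Fin r) ℝ) :
    ∀ {S : Finset (Fin n)}, ¬ InCone α S ε → residueMap α lam (h * complProd α S) = 0 := by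
  induction h using MvPolynomial.induction_on with
  | C a =>
    intro S hS
    rw [← smul_eq_C_mul, map_smul, residueMap_complProd_of_not_inCone hα hlam hS, smul_zero]
  | add p q hp hq =>
    intro S hS
    rw [add_mul, map_add, hp hS, hq hS, add_zero]
  | mul_X p k ih =>
    intro S hS
    by_cases hgen : Generating α S
    · obtain ⟨c, hc⟩ := exists_X_mul_complProd_eq_sum hgen k
      rw [mul_assoc, hc, Finset.mul_sum, map_sum]
      refine Finset.sum_eq_zero fun i _ => ?_
      rw [mul_left_comm, ← smul_eq_C_mul, map_smul,
        ih fun h => hS (h.mono (S.erase_subset i)), smul_zero]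
    · exact residueMap_mul_complProd_of_not_generating hα hlam hgen _

lemma residueMap_eq_zero_of_mem_JKIdeal (hα : ∀ i, α i ≠ 0) (hlam : IsJKFunctional α ε lam)
    {Q : MvPolynomial (Fin r) ℝ} (hQ : Q ∈ JKIdeal α ε) : residueMap α lam Q = 0 := by
  suffices ∀ p, residueMap α lam (p * Q) = 0 by simpa using this 1
  induction hQ using Submodule.span_induction with
  | mem g hg =>
    obtain ⟨K, hK, rfl⟩ := hg
    intro p
    have := residueMap_mul_complProd_of_not_inCone hα hlam p hK
    rwa [complProd, compl_compl] at this
  | zero => simp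
  | add x y _ _ hx hy => simp [mul_add, hx, hy]
  | smul a x _ hx =>
    intro p
    rw [smul_eq_mul, ← mul_assoc]
    exact hx _

end Residue

variable {J : Finset (Fin n)}

def idealSupLine (α : Fin n → Fin r → ℝ) (ε : Fin r → ℝ) (J : Finset (Fin n)) :
    Submodule ℝ (MvPolynomial (Fin r) ℝ) :=
  (JKIdeal α ε).restrictScalars ℝ ⊔ ℝ ∙ complProd α J

lemma mem_idealSupLine_of_mem_JKIdeal {Q : MvPolynomial (Fin r) ℝ} (hQ : Q ∈ JKIdeal α ε) :
    Q ∈ idealSupLine α ε J :=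
  Submodule.mem_sup_left hQ

lemma C_mul_mem_idealSupLine (a : ℝ) {Q : MvPolynomial (Fin r) ℝ}
    (hQ : Q ∈ idealSupLine α ε J) : C a * Q ∈ idealSupLine α ε J :=
  smul_eq_C_mul Q a ▸ Submodule.smul_mem _ a hQ

def outsideCost (J : Finset (Fin n)) (i : Fin n) : ℝ := if i ∈ J then 0 else 1

open Classical in
/-- The simplex objective `∑_{i ∈ σ \ J} tᵢ` at the basic solution `ε = ∑_{i ∈ σ} tᵢ αᵢ`, computed
as `ℓ ε` for any functional `ℓ` with `ℓ αᵢ = outsideCost J i` on `σ`. -/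
def basisCost (α : Fin n → Fin r → ℝ) (ε : Fin r → ℝ) (J σ : Finset (Fin n)) : ℝ :=
  if h : ∃ ℓ : Module.Dual ℝ (Fin r → ℝ), ∀ i ∈ σ, ℓ (α i) = outsideCost J i then h.choose ε
  else 0

lemma basisCost_eq {σ : Finset (Fin n)} {ℓ : Module.Dual ℝ (Fin r → ℝ)}
    (hℓ : ∀ i ∈ σ, ℓ (α i) = outsideCost J i) {t : Fin n → ℝ} (hε : ε = ∑ i ∈ σ, t i • α i) :
    basisCost α ε J σ = ℓ ε := by
  have hex : ∃ ℓ : Module.Dual ℝ (Fin r → ℝ), ∀ i ∈ σ, ℓ (α i) = outsideCost J i := ⟨ℓ, hℓ⟩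
  rw [basisCost, dif_pos hex, hε, map_sum, map_sum]
  exact Finset.sum_congr rfl fun i hi => by rw [map_smul, map_smul, hex.choose_spec i hi, hℓ i hi]

/-- The entering column of the simplex method: `ε ∈ Cone(J)` has cost `0`, while `σ ≠ J` has
positive cost, so `ℓ` cannot lie below the cost on every `αᵢ`. -/
lemma exists_outsideCost_lt (hreg : RegularWrt α ε) (hJr : J.card = r) (hεJ : InCone α J ε)
    {σ : Finset (Fin n)} (hσr : σ.card = r) (hσ : InCone α σ ε) (hne : σ ≠ J)
    {ℓ : Module.Dual ℝ (Fin r → ℝ)} (hℓ : ∀ i ∈ σ, ℓ (α i) = outsideCost J i) :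
    ∃ b ∉ σ, outsideCost J b < ℓ (α b) := by
  by_contra! hle
  have hle' : ∀ b, ℓ (α b) ≤ outsideCost J b := fun b =>
    if hb : b ∈ σ then (hℓ b hb).le else hle b hb
  obtain ⟨v, hv0, hvε⟩ := hεJ
  have hnonpos : ℓ ε ≤ 0 := by
    rw [hvε, map_sum]
    refine Finset.sum_nonpos fun b hb => ?_
    rw [map_smul, smul_eq_mul]
    simpa [outsideCost, hb] using mul_le_mul_of_nonneg_left (hle' b) (hv0 b hb)
  obtain ⟨u, hu0, huε⟩ := hσ
  obtain ⟨j, hjσ, hjJ⟩ : ∃ j ∈ σ, j ∉ J := Finset.not_subset.mp fun h =>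
    hne (Finset.eq_of_subset_of_card_le h (by omega))
  have hpos : 0 < ℓ ε := by
    rw [huε, map_sum]
    refine Finset.sum_pos' (fun i hi => ?_) ⟨j, hjσ, ?_⟩
    · rw [map_smul, hℓ i hi, smul_eq_mul, outsideCost]
      split_ifs <;> simp [hu0 i hi]
    · rw [map_smul, hℓ j hjσ, smul_eq_mul, outsideCost, if_neg hjJ, mul_one]
      exact hreg.coeff_pos hσr hu0 huε hjσ
  linarith

lemma basisCost_pivot_lt (hreg : RegularWrt α ε) {σ : Finset (Fin n)} (hσr : σ.card = r)
    (hσ : InCone α σ ε) {ℓ : Module.Dual ℝ (Fin r → ℝ)}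
    (hℓ : ∀ i ∈ σ, ℓ (α i) = outsideCost J i) {b : Fin n} (hb : b ∉ σ)
    (hbℓ : outsideCost J b < ℓ (α b)) {j : Fin n} (hj : j ∈ σ)
    (hτ : InCone α ((insert b σ).erase j) ε) :
    basisCost α ε J ((insert b σ).erase j) < basisCost α ε J σ := by
  set τ := (insert b σ).erase j
  have hτr : τ.card = r := hσr ▸ Finset.card_erase_insert_of_notMem hb hj
  have hbτ : b ∈ τ := Finset.mem_erase.mpr ⟨fun h => hb (h ▸ hj), Finset.mem_insert_self b σ⟩
  obtain ⟨t, ht0, htε⟩ := hτ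
  obtain ⟨ℓ', hℓ'⟩ := (isConeBasis_of_card_eq hτr
    (hreg.generating_of_inCone ⟨t, ht0, htε⟩)).exists_dual (outsideCost J)
  obtain ⟨u, -, huε⟩ := hσ
  have hrest : ∑ i ∈ τ.erase b, ℓ' (t i • α i) = ∑ i ∈ τ.erase b, ℓ (t i • α i) := by
    refine Finset.sum_congr rfl fun i hi => ?_
    have hiσ : i ∈ σ := by
      obtain ⟨hib, hiτ⟩ := Finset.mem_erase.mp hi
      exact (Finset.mem_insert.mp (Finset.mem_of_mem_erase hiτ)).resolve_left hib
    rw [map_smul, map_smul, hℓ' i (Finset.mem_of_mem_erase hi), hℓ i hiσ]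
  rw [basisCost_eq hℓ' htε, basisCost_eq hℓ huε, htε, map_sum, map_sum,
    ← Finset.add_sum_erase τ _ hbτ, ← Finset.add_sum_erase τ _ hbτ, hrest, add_lt_add_iff_right,
    map_smul, map_smul, hℓ' b hbτ, smul_eq_mul, smul_eq_mul]
  exact mul_lt_mul_of_pos_left hbℓ (hreg.coeff_pos hτr ht0 htε hbτ)

lemma complProd_eq_sum_pivot {σ : Finset (Fin n)} {b : Fin n} (hb : b ∉ σ) {w : Fin n → ℝ}
    (hw : α b = ∑ j ∈ σ, w j • α j) :
    complProd α σ = ∑ j ∈ σ, C (w j) * complProd α ((insert b σ).erase j) := by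
  rw [← linPoly_mul_complProd_of_eq_sum (Finset.subset_insert b σ) hw,
    linPoly_mul_complProd (Finset.mem_insert_self b σ), Finset.erase_insert hb]

theorem complProd_mem_idealSupLine (hreg : RegularWrt α ε) (hJr : J.card = r)
    (hεJ : InCone α J ε) {σ : Finset (Fin n)} (hσr : σ.card = r) (hσ : InCone α σ ε) :
    complProd α σ ∈ idealSupLine α ε J := by
  classical
  by_contra hσW
  obtain ⟨σ₀, hσ₀, hmin⟩ := Finset.exists_min_image
    (Finset.univ.filter fun τ => τ.card = r ∧ InCone α τ ε ∧ complProd α τ ∉ idealSupLine α ε J)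
    (basisCost α ε J) ⟨σ, by simp [hσr, hσ, hσW]⟩
  simp only [Finset.mem_filter, Finset.mem_univ, true_and] at hσ₀ hmin
  obtain ⟨hσ₀r, hσ₀ε, hσ₀W⟩ := hσ₀
  have hne : σ₀ ≠ J := by
    rintro rfl
    exact hσ₀W (Submodule.mem_sup_right (Submodule.mem_span_singleton_self _))
  have hσ₀gen := hreg.generating_of_inCone hσ₀ε
  obtain ⟨ℓ, hℓ⟩ := (isConeBasis_of_card_eq hσ₀r hσ₀gen).exists_dual (outsideCost J)
  obtain ⟨b, hb, hbℓ⟩ := exists_outsideCost_lt hreg hJr hεJ hσ₀r hσ₀ε hne hℓ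
  obtain ⟨w, hw⟩ := (Submodule.mem_span_image_finset_iff_exists_fun' ℝ).mp
    (hσ₀gen ▸ Submodule.mem_top : α b ∈ Submodule.span ℝ (α '' σ₀))
  refine hσ₀W ((complProd_eq_sum_pivot hb hw.symm).symm ▸ Submodule.sum_mem _ fun j hj => ?_)
  refine C_mul_mem_idealSupLine _ ?_
  by_cases hτ : InCone α ((insert b σ₀).erase j) ε
  · by_contra hτW
    exact (hmin _ ⟨hσ₀r ▸ Finset.card_erase_insert_of_notMem hb hj, hτ, hτW⟩).not_gt
      (basisCost_pivot_lt hreg hσ₀r hσ₀ε hℓ hb hbℓ hj hτ)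
  · exact mem_idealSupLine_of_mem_JKIdeal (complProd_mem_JKIdeal hτ)

theorem mul_complProd_mem_idealSupLine (hreg : RegularWrt α ε)
    (hJr : J.card = r) (hεJ : InCone α J ε) {d : ℕ} {h : MvPolynomial (Fin r) ℝ}
    (hh : h.IsHomogeneous d) :
    ∀ {S : Finset (Fin n)}, S.card = d + r → h * complProd α S ∈ idealSupLine α ε J := by
  refine MvPolynomial.IsHomogeneous.induction_on (motive := fun d h => ∀ {S : Finset (Fin n)},
    S.card = d + r → h * complProd α S ∈ idealSupLine α ε J) ?_ ?_ ?_ ?_ hh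
  · intro d S _
    simp
  · intro d p q hp hq S hS
    rw [add_mul]
    exact add_mem (hp hS) (hq hS)
  · intro a S hS
    refine C_mul_mem_idealSupLine a ?_
    by_cases hε : InCone α S ε
    · exact complProd_mem_idealSupLine hreg hJr hεJ (by simpa using hS) hε
    · exact mem_idealSupLine_of_mem_JKIdeal (complProd_mem_JKIdeal hε)
  · intro d p k ih S hS
    by_cases hε : InCone α S ε
    · obtain ⟨c, hc⟩ := exists_X_mul_complProd_eq_sum (hreg.generating_of_inCone hε) k
      rw [mul_comm (X k), mul_assoc, hc, Finset.mul_sum]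
      refine Submodule.sum_mem _ fun i hi => ?_
      rw [mul_left_comm]
      exact C_mul_mem_idealSupLine _ (ih (by rw [Finset.card_erase_of_mem hi, hS]; omega))
    · exact mem_idealSupLine_of_mem_JKIdeal (Ideal.mul_mem_left _ _ (complProd_mem_JKIdeal hε))

theorem exists_sub_smul_complProd_mem_JKIdeal (hreg : RegularWrt α ε)
    (hJ : IsConeBasis α J) (hεJ : InCone α J ε) {P : MvPolynomial (Fin r) ℝ}
    (hP : P.IsHomogeneous (n - r)) : ∃ c : ℝ, P - c • complProd α J ∈ JKIdeal α ε := by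
  have hJr := hJ.card_eq
  have hrn : r ≤ n := hJr ▸ (Finset.card_le_univ J).trans_eq (Fintype.card_fin n)
  have hPW : P ∈ idealSupLine α ε J := by
    simpa [complProd_univ] using mul_complProd_mem_idealSupLine hreg hJr hεJ hP
      (S := Finset.univ) (by rw [Finset.card_univ, Fintype.card_fin]; omega)
  obtain ⟨y, hy, z, hz, rfl⟩ := Submodule.mem_sup.mp hPW
  obtain ⟨c, rfl⟩ := Submodule.mem_span_singleton.mp hz
  exact ⟨c, by simpa using hy⟩

lemma MonomialOrd.exists_max (o : MonomialOrd r) {s : Finset (Fin r →₀ ℕ)} (hs : s.Nonempty) :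
    ∃ m ∈ s, ∀ m' ∈ s, m' ≠ m → o.lt m' m := by
  let R : s → s → Prop := fun a b => o.lt b a
  have : IsTrans s R := ⟨fun a b c hab hbc => o.trans _ _ _ hbc hab⟩
  have : Std.Irrefl R := ⟨fun a => o.irrefl a⟩
  obtain ⟨⟨m, hm⟩, -, hmax⟩ :=
    (Finite.wellFounded_of_trans_of_irrefl R).has_min Set.univ ⟨⟨_, hs.choose_spec⟩, trivial⟩
  exact ⟨m, hm, fun m' hm' hne =>
    (o.total m' m hne).resolve_right fun h => hmax ⟨m', hm'⟩ trivial h⟩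

lemma eq_zero_of_mem_of_forall_notMem_ltIdeal (o : MonomialOrd r)
    {I : Ideal (MvPolynomial (Fin r) ℝ)} {f : MvPolynomial (Fin r) ℝ} (hf : f ∈ I)
    (h : ∀ m ∈ f.support, monomial m (1 : ℝ) ∉ ltIdeal o I) : f = 0 := by
  by_contra hne
  obtain ⟨m, hm, hmax⟩ := o.exists_max (support_nonempty.mpr hne)
  exact h m hm (Ideal.subset_span ⟨f, hf, hne, m, ⟨hm, hmax⟩, rfl⟩)

lemma IsNormalForm.smul {o : MonomialOrd r} {I : Ideal (MvPolynomial (Fin r) ℝ)}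
    {f N : MvPolynomial (Fin r) ℝ} (h : IsNormalForm o I f N) (c : ℝ) :
    IsNormalForm o I (c • f) (c • N) :=
  ⟨by rw [← smul_sub, smul_eq_C_mul]; exact I.mul_mem_left _ h.1,
    fun m hm => h.2 m (support_smul hm)⟩

lemma IsNormalForm.eq_of_sub_mem {o : MonomialOrd r} {I : Ideal (MvPolynomial (Fin r) ℝ)}
    {f f' N N' : MvPolynomial (Fin r) ℝ} (hN : IsNormalForm o I f N)
    (hN' : IsNormalForm o I f' N') (h : f - f' ∈ I) : N = N' := by
  refine sub_eq_zero.mp (eq_zero_of_mem_of_forall_notMem_ltIdeal o (I := I) ?_ fun m hm => ?_)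
  · have := I.add_mem (I.sub_mem h hN.1) hN'.1
    rwa [show f - f' - (f - N) + (f' - N') = N - N' by ring] at this
  · rcases Finset.mem_union.mp (support_sub _ N N' hm) with hm | hm
    exacts [hN.2 m hm, hN'.2 m hm]

end Development

theorem jk_residue_via_normal_forms_general {r n : ℕ}
    (α : Fin n → Fin r → ℝ) (hα : ∀ i, α i ≠ 0)
    (ε : Fin r → ℝ) (hreg : RegularWrt α ε)
    (J : Finset (Fin n)) (hJ : IsConeBasis α J) (hεJ : InCone α J ε)
    (lam : Frac r →ₗ[ℝ] ℝ) (hlam : IsJKFunctional α ε lam)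
    (o : MonomialOrd r)
    (P : MvPolynomial (Fin r) ℝ) (hP : P.IsHomogeneous (n - r))
    (NP NΔ : MvPolynomial (Fin r) ℝ)
    (hNP : IsNormalForm o (JKIdeal α ε) P NP)
    (hNΔ : IsNormalForm o (JKIdeal α ε) (∏ i ∈ Jᶜ, linPoly (α i)) NΔ) :
    NΔ ≠ 0 ∧
      C (Real.sqrt (gram α J) * lam (emb P / ∏ i, emb (linPoly (α i)))) * NΔ = NP := by
  have hΔ : residueMap α lam (complProd α J) = 1 / √(gram α J) := by
    rw [residueMap_complProd hα]
    exact (hlam.2.2 J hJ).1 hεJ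
  have hg : √(gram α J) ≠ 0 := (Real.sqrt_pos.mpr hJ.gram_pos).ne'
  obtain ⟨c, hc⟩ := exists_sub_smul_complProd_mem_JKIdeal hreg hJ hεJ hP
  have hPc : √(gram α J) * residueMap α lam P = c := by
    have := residueMap_eq_zero_of_mem_JKIdeal hα hlam hc
    rw [map_sub, map_smul, hΔ, sub_eq_zero] at this
    rw [this, smul_eq_mul]
    field_simp
  refine ⟨fun h0 => ?_, ?_⟩
  · have hΔI : complProd α J ∈ JKIdeal α ε := by
      have := hNΔ.1
      rwa [h0, sub_zero] at this
    exact one_div_ne_zero hg (hΔ ▸ residueMap_eq_zero_of_mem_JKIdeal hα hlam hΔI)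
  · rw [← residueMap_apply, hPc, ← smul_eq_C_mul]
    exact (hNP.eq_of_sub_mem (hNΔ.smul c) hc).symm

/-- **Jeffrey–Kirwan residue via normal forms.** With `N_P, N_Δ` normal forms of `P` and
`Δ = ∏_{i∉J} αᵢ` with respect to `I_{𝔄,ε}`, one has `N_Δ ≠ 0` and
`√(det[⟨αⱼ,α_k⟩]_{j,k∈J}) · λ(P/∏ᵢαᵢ) · N_Δ = N_P`. -/
theorem jk_residue_via_normal_forms {r n : ℕ} (hrn : r ≤ n)
    (α : Fin n → Fin r → ℝ) (hα : ∀ i, α i ≠ 0) (hpol : Polarized α)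
    (ε : Fin r → ℝ) (hreg : RegularWrt α ε)
    (J : Finset (Fin n)) (hJ : IsConeBasis α J) (hεJ : InCone α J ε)
    (lam : Frac r →ₗ[ℝ] ℝ) (hlam : IsJKFunctional α ε lam)
    (o : MonomialOrd r)
    (P : MvPolynomial (Fin r) ℝ) (hP : P.IsHomogeneous (n - r))
    (NP NΔ : MvPolynomial (Fin r) ℝ)
    (hNP : IsNormalForm o (JKIdeal α ε) P NP)
    (hNΔ : IsNormalForm o (JKIdeal α ε) (∏ i ∈ Jᶜ, linPoly (α i)) NΔ) :
    NΔ ≠ 0 ∧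
      C (Real.sqrt (gram α J) * lam (emb P / ∏ i, emb (linPoly (α i)))) * NΔ = NP :=
  jk_residue_via_normal_forms_general α hα ε hreg J hJ hεJ lam hlam o P hP NP NΔ hNP hNΔ
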